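/- arXiv:2602.11324 — 2 statements merged into one kernel-verified Lean document; each statement's English description precedes it below -/
import Mathlib

section
/- Let T be a string of length n and let ℓ, p ∈ [1..n] with ℓ ≥ 2p. Define R_{ℓ,p}(T) = { i ∈ [0..n−ℓ] : per(T[i..i+ℓ)) ≤ p }. Then RUNS_{ℓ,p}(T) = { T[b..e) : [b..e−ℓ] is a non-empty maximal integer interval contained in R_{ℓ,p}(T) }, where an interval [b..e−ℓ] ⊆ R_{ℓ,p}(T) is maximal if b−1 ∉ R_{ℓ,p}(T) and e−ℓ+1 ∉ R_{ℓ,p}(T). -/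
namespace SyncFormal

/-- The fragment `T[i..j)` of a string `T`. -/
def frag {α : Type*} (T : List α) (i j : ℕ) : List α :=
  (T.drop i).take (j - i)

/-- `p` is a period of the string `S`. -/
def IsPeriod {α : Type*} (S : List α) (p : ℕ) : Prop :=
  1 ≤ p ∧ p ≤ S.length ∧ ∀ i : ℕ, i + p < S.length → S[i]? = S[i + p]?

/-- `per S`: the smallest period of `S`. -/
noncomputable def per {α : Type*} (S : List α) : ℕ :=
  sInf {p | IsPeriod S p}

/-- `Sync` is a `τ`-synchronizing set of `T`. -/
def IsSyncSet {α : Type*} (T : List α) (τ : ℕ) (Sync : Set ℕ) : Prop :=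
  (∀ i ∈ Sync, i + 2 * τ ≤ T.length) ∧
  (∀ i j : ℕ, i + 2 * τ ≤ T.length → j + 2 * τ ≤ T.length → i ∈ Sync →
    frag T i (i + 2 * τ) = frag T j (j + 2 * τ) → j ∈ Sync) ∧
  (∀ i : ℕ, i + 3 * τ ≤ T.length + 1 →
    (Set.Ico i (i + τ) ∩ Sync = ∅ ↔ 3 * per (frag T i (i + 3 * τ - 1)) ≤ τ))

/-- `T[b..e)` is a run (maximal repetition) in `T`. -/
def IsRun {α : Type*} (T : List α) (b e : ℕ) : Prop :=
  b < e ∧ e ≤ T.length ∧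
  2 * per (frag T b e) ≤ e - b ∧
  (b = 0 ∨ T[b - 1]? ≠ T[b - 1 + per (frag T b e)]?) ∧
  (e = T.length ∨ T[e]? ≠ T[e - per (frag T b e)]?)

/-- `T[b..e)` is a run of length at least `ℓ` and period at most `p`
(i.e., an element of `RUNS_{ℓ,p}(T)`). -/
def IsRunLP {α : Type*} (T : List α) (ℓ p b e : ℕ) : Prop :=
  IsRun T b e ∧ ℓ ≤ e - b ∧ per (frag T b e) ≤ p

/-- `λ_k = (8/7)^⌊k/2⌋`. -/
noncomputable def lam (k : ℕ) : ℝ := (8 / 7 : ℝ) ^ (k / 2)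

/-- `α_0 = 1`, `α_{k+1} = α_k + ⌊λ_k⌋`. -/
noncomputable def alph : ℕ → ℕ
  | 0 => 1
  | k + 1 => alph k + ⌊lam k⌋₊

/-- `m`-fold concatenation `R^m`. -/
def listPow {α : Type*} (R : List α) : ℕ → List α
  | 0 => []
  | m + 1 => R ++ listPow R m

/-- The length of the primitive root of `S`
(the shortest prefix `R` of `S` with `S = R^m` for some `m ≥ 1`). -/
noncomputable def primRootLen {α : Type*} (S : List α) : ℕ :=
  sInf {r | 0 < r ∧ ∃ m : ℕ, 1 ≤ m ∧ S = listPow (S.take r) m}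

/-- `i` and `j` are consecutive elements of the set `S`. -/
def Consecutive (S : Set ℕ) (i j : ℕ) : Prop :=
  i ∈ S ∧ j ∈ S ∧ i < j ∧ ∀ m ∈ S, m ≤ i ∨ j ≤ m

/-- `(B k)_{k ∈ ℕ}` is a recompression chain for `T`. -/
def IsRecompressionChain {α : Type*} (T : List α) (B : ℕ → Set ℕ) : Prop :=
  B 0 = Set.Ico 1 T.length ∧
  (∀ k, B (k + 1) ⊆ B k) ∧
  (∀ k, B k ⊆ Set.Ico 1 T.length) ∧
  (∀ k, (B k).Finite ∧ ((B k).ncard : ℝ) * lam k ≤ 4 * T.length) ∧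
  (∀ k i j : ℕ, alph k ≤ i → i + alph k ≤ T.length → alph k ≤ j → j + alph k ≤ T.length →
    i ∈ B k → frag T (i - alph k) (i + alph k) = frag T (j - alph k) (j + alph k) → j ∈ B k) ∧
  (∀ k i j : ℕ, Consecutive (B k ∪ {0, T.length}) i j →
    (((j - i : ℕ) : ℝ) ≤ 7 / 4 * lam k ∨ (primRootLen (frag T i j) : ℝ) ≤ lam k))

/-- `k(τ) = max{ j : j = 0 ∨ 16·λ_{j-1} ≤ τ }`. -/
noncomputable def kOf (τ : ℕ) : ℕ :=
  sSup {j : ℕ | j = 0 ∨ 16 * lam (j - 1) ≤ (τ : ℝ)}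

/-- The Elias-γ code of a positive integer `x`:
`⌊log₂ x⌋` zeros followed by the binary representation of `x` (MSB first). -/
def eliasGamma (x : ℕ) : List Bool :=
  List.replicate (Nat.log 2 x) false ++ (Nat.bits x).reverse

/-- Sparse encoding, with `z` pending zeros in front of the remaining sequence. -/
def sparseEncAux : ℕ → List ℕ → List Bool
  | z, [] => if z = 0 then [] else false :: eliasGamma z
  | z, 0 :: rest => sparseEncAux (z + 1) rest
  | z, x :: rest =>
      (if z = 0 then [] else false :: eliasGamma z) ++ (true :: eliasGamma x)
        ++ sparseEncAux 0 rest

/-- The sparse encoding `⟨A⟩` of a sequence of non-negative integers. -/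
def sparseEnc (A : List ℕ) : List Bool := sparseEncAux 0 A

/-- Number of bits contributed by the zero-run tokens of the sparse encoding,
with `z` pending zeros. -/
def zeroRunBitsAux : ℕ → List ℕ → ℕ
  | z, [] => if z = 0 then 0 else 2 * Nat.log 2 z + 2
  | z, 0 :: rest => zeroRunBitsAux (z + 1) rest
  | z, _ :: rest => (if z = 0 then 0 else 2 * Nat.log 2 z + 2) + zeroRunBitsAux 0 rest

/-- Number of bits contributed by zero-run tokens to `⟨A⟩`. -/
def zeroRunBits (A : List ℕ) : ℕ := zeroRunBitsAux 0 A

/-- The natural number whose binary representation (MSB first) is `B`. -/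
def bitsToNat (B : List Bool) : ℕ :=
  B.foldl (fun n b => 2 * n + cond b 1 0) 0

/-- The symbol of the zipped string for a column of values. -/
def zipSym (col : List ℕ) : ℕ :=
  if col.all (· == 0) then 0 else bitsToNat (sparseEnc col)

/-- `zip(A_1, …, A_t)` for sequences of common length `n`. -/
def zipSeqs (A : List (List ℕ)) (n : ℕ) : List ℕ :=
  (List.range n).map fun i => zipSym (A.map fun S => S.getD i 0)

/-- Running a deterministic transducer with transition function `δ` from state `s`
on an input string: returns the state sequence `s_0, …, s_n` and the output string. -/
def runAux {Q Γ I : Type*} (δ : Q → I → Q × Γ) : Q → List I → List Q × List Γ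
  | s, [] => ([s], [])
  | s, x :: xs =>
      (s :: (runAux δ (δ s x).1 xs).1, (δ s x).2 :: (runAux δ (δ s x).1 xs).2)

/-- `R_{ℓ,p}(T) = { i : per(T[i..i+ℓ)) ≤ p }`. -/
def RSet {α : Type*} (T : List α) (ℓ p : ℕ) : Set ℕ :=
  {i | i + ℓ ≤ T.length ∧ per (frag T i (i + ℓ)) ≤ p}

section Aux
variable {α : Type*}

/-- `q` is a period of `T` on the index interval `[a, c)`. -/
def PerF (T : List α) (a c q : ℕ) : Prop :=
  ∀ i : ℕ, a ≤ i → i + q < c → T[i]? = T[i + q]?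

lemma perF_mono {T : List α} {a c q a' c' : ℕ} (h : PerF T a c q)
    (ha : a ≤ a') (hc : c' ≤ c) : PerF T a' c' q :=
  fun i hi hic => h i (ha.trans hi) (hic.trans_le hc)

lemma frag_getElem? (T : List α) (a c i : ℕ) (h : i < c - a) :
    (frag T a c)[i]? = T[a + i]? := by
  unfold frag
  rw [List.getElem?_take, if_pos h, List.getElem?_drop]

lemma frag_length (T : List α) (a c : ℕ) :
    (frag T a c).length = min (c - a) (T.length - a) := by
  simp [frag]

lemma isPeriod_frag_iff {T : List α} {a c q : ℕ} (hac : a ≤ c) (hc : c ≤ T.length) :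
    IsPeriod (frag T a c) q ↔ 1 ≤ q ∧ q ≤ c - a ∧ PerF T a c q := by
  have hlen : (frag T a c).length = c - a := by rw [frag_length]; omega
  constructor
  · rintro ⟨h1, h2, h3⟩
    rw [hlen] at h2 h3
    refine ⟨h1, h2, ?_⟩
    intro i hi hic
    have h3' := h3 (i - a) (by omega)
    rw [frag_getElem? T a c _ (by omega), frag_getElem? T a c _ (by omega)] at h3'
    have e1 : a + (i - a) = i := by omega
    have e2 : a + (i - a + q) = i + q := by omega
    rwa [e1, e2] at h3'
  · rintro ⟨h1, h2, h3⟩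
    refine ⟨h1, by rw [hlen]; exact h2, ?_⟩
    intro i hi
    rw [hlen] at hi
    rw [frag_getElem? T a c _ (by omega), frag_getElem? T a c _ (by omega)]
    have := h3 (a + i) (by omega) (by omega)
    rwa [Nat.add_assoc] at this

lemma per_le {S : List α} {q : ℕ} (h : IsPeriod S q) : per S ≤ q := Nat.sInf_le h

lemma per_isPeriod {S : List α} (h : 0 < S.length) : IsPeriod S (per S) := by
  have hne : {p | IsPeriod S p}.Nonempty :=
    ⟨S.length, ⟨h, le_rfl, fun i hi => absurd hi (by omega)⟩⟩
  exact Nat.sInf_mem hne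

/-- Basic facts about the smallest period of a nonempty fragment. -/
lemma per_frag_spec {T : List α} {a c : ℕ} (ha : a < c) (hc : c ≤ T.length) :
    1 ≤ per (frag T a c) ∧ per (frag T a c) ≤ c - a ∧ PerF T a c (per (frag T a c)) := by
  have hlen : 0 < (frag T a c).length := by rw [frag_length]; omega
  exact (isPeriod_frag_iff ha.le hc).mp (per_isPeriod hlen)

lemma per_frag_le {T : List α} {a c q : ℕ} (hac : a ≤ c) (hc : c ≤ T.length)
    (h1 : 1 ≤ q) (h2 : q ≤ c - a) (h3 : PerF T a c q) : per (frag T a c) ≤ q :=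
  per_le ((isPeriod_frag_iff hac hc).mpr ⟨h1, h2, h3⟩)

/-- Iterating a period. -/
lemma perF_mul {T : List α} {a c q : ℕ} (h : PerF T a c q) :
    ∀ (k i : ℕ), a ≤ i → i + q * k < c → T[i]? = T[i + q * k]? := by
  intro k
  induction k with
  | zero => intro i _ _; rw [Nat.mul_zero, Nat.add_zero]
  | succ k IH =>
    intro i hi hic
    have h1 : T[i]? = T[i + q]? := h i hi (by nlinarith [Nat.mul_le_mul_left q (Nat.succ_le_succ (Nat.zero_le k))])
    have h2 := IH (i + q) (by omega) (by rw [Nat.mul_succ] at hic; omega)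
    rw [h1, h2, Nat.mul_succ]; ring_nf

/-- Propagation of a prefix period to the whole interval. -/
lemma prop_left {T : List α} {a c m q g : ℕ} (hq : 0 < q) (hg : 0 < g)
    (h1 : PerF T a c q) (h2 : PerF T a m g) (hm : a + q + g ≤ m) (hmc : m ≤ c) :
    PerF T a c g := by
  suffices H : ∀ n i, i ≤ n → a ≤ i → i + g < c → T[i]? = T[i + g]? from
    fun i hi hic => H i i le_rfl hi hic
  intro n
  induction n with
  | zero =>
    intro i hn hi hic
    exact h2 i hi (by omega)
  | succ n IH =>
    intro i hn hi hic
    by_cases hcase : i + g < m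
    · exact h2 i hi hcase
    · have hiq : a + q ≤ i := by omega
      obtain ⟨j, hj⟩ : ∃ j, j + q = i := ⟨i - q, by omega⟩
      have e1 : T[j]? = T[j + q]? := h1 j (by omega) (by omega)
      have e2 : T[j + g]? = T[j + g + q]? := h1 (j + g) (by omega) (by omega)
      have e3 : T[j]? = T[j + g]? := IH j (by omega) (by omega) (by omega)
      have e4 : j + g + q = i + g := by omega
      have e5 : T[j + q]? = T[j + g + q]? := e1.symm.trans (e3.trans e2)
      rwa [hj, e4] at e5

/-- Propagation of a suffix period to the whole interval. -/
lemma prop_right {T : List α} {a c m q g : ℕ} (hq : 0 < q) (hg : 0 < g)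
    (h1 : PerF T a c q) (h2 : PerF T m c g) (ham : a ≤ m) (hm : m + q + g ≤ c) :
    PerF T a c g := by
  suffices H : ∀ n i, c ≤ i + n → a ≤ i → i + g < c → T[i]? = T[i + g]? from
    fun i hi hic => H c i (by omega) hi hic
  intro n
  induction n with
  | zero => intro i hn hi hic; omega
  | succ n IH =>
    intro i hn hi hic
    by_cases hcase : m ≤ i
    · exact h2 i hcase hic
    · have e1 : T[i]? = T[i + q]? := h1 i hi (by omega)
      have e2 : T[i + g]? = T[i + g + q]? := h1 (i + g) (by omega) (by omega)
      have e3 : T[i + q]? = T[i + q + g]? := IH (i + q) (by omega) (by omega) (by omega)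
      have e4 : i + g + q = i + q + g := by omega
      rw [e1, e3, e2, e4]

/-- Weak Fine–Wilf theorem: an interval with periods `q` and `q'` and length at
least `q + q'` has period `gcd q q'`. -/
lemma fw {T : List α} : ∀ N q q', q + q' ≤ N → 0 < q → 0 < q' →
    ∀ a c, PerF T a c q → PerF T a c q' → a + q + q' ≤ c →
    PerF T a c (Nat.gcd q q') := by
  intro N
  induction N with
  | zero => intro q q' h hq; omega
  | succ N IH =>
    intro q q' hN hq hq' a c h h' hc
    rcases lt_trichotomy q q' with hlt | heq | hgt
    · -- q < q'
      have hper'' : PerF T a (c - q) (q' - q) := by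
        intro i hi hic
        have e1 : T[i]? = T[i + q']? := h' i hi (by omega)
        have e2 : T[i + (q' - q)]? = T[i + (q' - q) + q]? := h (i + (q' - q)) (by omega) (by omega)
        have e3 : i + (q' - q) + q = i + q' := by omega
        rw [e1, e2, e3]
      have hperq : PerF T a (c - q) q := perF_mono h le_rfl (Nat.sub_le c q)
      have hgcd : Nat.gcd q (q' - q) = Nat.gcd q q' := by
        conv_rhs => rw [← Nat.sub_add_cancel hlt.le, Nat.gcd_add_self_right]
      have hg := IH q (q' - q) (by omega) hq (by omega) a (c - q) hperq hper'' (by omega)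
      have hgle : Nat.gcd q q' ≤ q' - q := by
        rw [← hgcd]; exact Nat.le_of_dvd (by omega) (Nat.gcd_dvd_right _ _)
      rw [hgcd] at hg
      exact prop_left hq (Nat.gcd_pos_of_pos_left _ hq) h hg (by omega) (by omega)
    · subst heq; rw [Nat.gcd_self]; exact h
    · -- q' < q
      have hper'' : PerF T a (c - q') (q - q') := by
        intro i hi hic
        have e1 : T[i]? = T[i + q]? := h i hi (by omega)
        have e2 : T[i + (q - q')]? = T[i + (q - q') + q']? := h' (i + (q - q')) (by omega) (by omega)
        have e3 : i + (q - q') + q' = i + q := by omega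
        rw [e1, e2, e3]
      have hperq : PerF T a (c - q') q' := perF_mono h' le_rfl (Nat.sub_le c q')
      have hgcd : Nat.gcd (q - q') q' = Nat.gcd q q' := by
        rw [Nat.gcd_comm, Nat.gcd_comm q q']
        conv_rhs => rw [← Nat.sub_add_cancel hgt.le, Nat.gcd_add_self_right]
      have hg := IH (q - q') q' (by omega) (by omega) hq' a (c - q') hper'' hperq (by omega)
      have hgle : Nat.gcd q q' ≤ q - q' := by
        rw [← hgcd]; exact Nat.le_of_dvd (by omega) (Nat.gcd_dvd_left _ _)
      rw [hgcd] at hg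
      exact prop_left hq' (Nat.gcd_pos_of_pos_left _ hq) h' hg (by omega) (by omega)

/-- Two periods `q1, q2 ≤ p` on an interval of length `ℓ - 1 ≥ 2p - 1`
yield the period `gcd q1 q2`. -/
lemma overlap_gcd {T : List α} {u v q1 q2 p ℓ : ℕ} (h1 : PerF T u v q1) (h2 : PerF T u v q2)
    (hq1 : 0 < q1) (hq2 : 0 < q2) (hp1 : q1 ≤ p) (hp2 : q2 ≤ p) (hl : 2 * p ≤ ℓ)
    (hv : u + ℓ ≤ v + 1) : PerF T u v (Nat.gcd q1 q2) := by
  rcases eq_or_ne q1 q2 with h | h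
  · subst h; rw [Nat.gcd_self]; exact h1
  · exact fw (q1 + q2) q1 q2 le_rfl hq1 hq2 u v h1 h2 (by omega)

/-- A divisor of the minimal period that is itself a period equals the minimal period. -/
lemma gcd_eq_per {T : List α} {a c g : ℕ} (hac : a < c) (hc : c ≤ T.length)
    (hgd : g ∣ per (frag T a c)) (hg : 0 < g) (hgper : PerF T a c g) :
    g = per (frag T a c) := by
  obtain ⟨h1, h2, _⟩ := per_frag_spec hac hc
  have hgle : g ≤ per (frag T a c) := Nat.le_of_dvd (by omega) hgd
  have hle : per (frag T a c) ≤ g := per_frag_le hac.le hc hg (by omega) hgper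
  omega

/-- If the run `T[b..e)` of minimal period `q ≤ p` has `b - 1` in `R_{ℓ,p}`,
then the run extends one position to the left. -/
lemma ext_left {T : List α} {b e ℓ p : ℕ}
    (hbe : b < e) (he : e ≤ T.length) (hl : 2 * p ≤ ℓ) (hle : ℓ ≤ e - b) (hb : 1 ≤ b)
    (hq : per (frag T b e) ≤ p) (hx : (b - 1) ∈ RSet T ℓ p) :
    T[b - 1]? = T[b - 1 + per (frag T b e)]? := by
  obtain ⟨hq1, hq2, hrun⟩ := per_frag_spec hbe he
  obtain ⟨hxlen, hxper⟩ := hx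
  have hp1 : 1 ≤ p := le_trans hq1 hq
  have hble : b + ℓ ≤ e := by omega
  obtain ⟨hq'1, hq'2, hF⟩ := per_frag_spec (T := T) (a := b - 1) (c := b - 1 + ℓ) (by omega) hxlen
  set q := per (frag T b e) with hqdef
  set q' := per (frag T (b - 1) (b - 1 + ℓ)) with hq'def
  -- overlap [b, b + ℓ - 1)
  have ho1 : PerF T b (b + ℓ - 1) q := perF_mono hrun le_rfl (by omega)
  have ho2 : PerF T b (b + ℓ - 1) q' := perF_mono hF (by omega) (by omega)
  have hg := overlap_gcd ho1 ho2 hq1 hq'1 hq hxper hl (by omega)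
  set g := Nat.gcd q q' with hgdef
  have hgq : g ∣ q := Nat.gcd_dvd_left _ _
  have hgq' : g ∣ q' := Nat.gcd_dvd_right _ _
  have hgpos : 0 < g := Nat.gcd_pos_of_pos_left _ hq1
  have hgleq : g ≤ q := Nat.le_of_dvd (by omega) hgq
  -- propagate g to the whole run
  have hrg : PerF T b e g := by
    rcases eq_or_lt_of_le hgleq with h | h
    · rwa [h]
    · exact prop_left (by omega) hgpos hrun hg (by omega) (by omega)
  have hgq2 : g = per (frag T b e) := gcd_eq_per hbe he (hqdef ▸ hgq) hgpos hrg
  rw [← hqdef] at hgq2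
  have hdvd : q ∣ q' := hgq2 ▸ hgq'
  obtain ⟨k, hk⟩ := hdvd
  have hk1 : 1 ≤ k := by
    rcases Nat.eq_zero_or_pos k with rfl | h
    · rw [Nat.mul_zero] at hk; omega
    · exact h
  have hmul : q + q * (k - 1) = q' := by
    have hkk : k - 1 + 1 = k := by omega
    calc q + q * (k - 1) = q * (k - 1 + 1) := by ring
    _ = q' := by rw [hkk, ← hk]
  set M := q * (k - 1) with hM
  have e1 : T[b - 1]? = T[b - 1 + q']? := hF (b - 1) le_rfl (by omega)
  have e2 : T[b - 1 + q]? = T[b - 1 + q + M]? :=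
    perF_mul hrun (k - 1) (b - 1 + q) (by omega) (by rw [← hM]; omega)
  have e3 : b - 1 + q + M = b - 1 + q' := by omega
  rw [e3] at e2
  exact e1.trans e2.symm

/-- If the run `T[b..e)` of minimal period `q ≤ p` has `e - ℓ + 1` in `R_{ℓ,p}`,
then the run extends one position to the right. -/
lemma ext_right {T : List α} {b e ℓ p : ℕ}
    (hbe : b < e) (he : e ≤ T.length) (hl : 2 * p ≤ ℓ) (hle : ℓ ≤ e - b)
    (hq : per (frag T b e) ≤ p) (hx : (e - ℓ + 1) ∈ RSet T ℓ p) :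
    T[e]? = T[e - per (frag T b e)]? := by
  obtain ⟨hq1, hq2, hrun⟩ := per_frag_spec hbe he
  obtain ⟨hxlen, hxper⟩ := hx
  have hp1 : 1 ≤ p := le_trans hq1 hq
  have hble : b + ℓ ≤ e := by omega
  have hxe : e - ℓ + 1 + ℓ = e + 1 := by omega
  rw [hxe] at hxlen
  obtain ⟨hq'1, hq'2, hF⟩ :=
    per_frag_spec (T := T) (a := e - ℓ + 1) (c := e - ℓ + 1 + ℓ) (by omega) (by omega)
  set q := per (frag T b e) with hqdef
  set q' := per (frag T (e - ℓ + 1) (e - ℓ + 1 + ℓ)) with hq'def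
  -- overlap [e - ℓ + 1, e)
  have ho1 : PerF T (e - ℓ + 1) e q := perF_mono hrun (by omega) le_rfl
  have ho2 : PerF T (e - ℓ + 1) e q' := perF_mono hF le_rfl (by omega)
  have hg := overlap_gcd ho1 ho2 hq1 hq'1 hq hxper hl (by omega)
  set g := Nat.gcd q q' with hgdef
  have hgq : g ∣ q := Nat.gcd_dvd_left _ _
  have hgq' : g ∣ q' := Nat.gcd_dvd_right _ _
  have hgpos : 0 < g := Nat.gcd_pos_of_pos_left _ hq1
  have hgleq : g ≤ q := Nat.le_of_dvd (by omega) hgq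
  have hrg : PerF T b e g := by
    rcases eq_or_lt_of_le hgleq with h | h
    · rwa [h]
    · exact prop_right (by omega) hgpos hrun hg (by omega) (by omega)
  have hgq2 : g = per (frag T b e) := gcd_eq_per hbe he (hqdef ▸ hgq) hgpos hrg
  rw [← hqdef] at hgq2
  have hdvd : q ∣ q' := hgq2 ▸ hgq'
  obtain ⟨k, hk⟩ := hdvd
  have hk1 : 1 ≤ k := by
    rcases Nat.eq_zero_or_pos k with rfl | h
    · rw [Nat.mul_zero] at hk; omega
    · exact h
  have hmul : q + q * (k - 1) = q' := by
    have hkk : k - 1 + 1 = k := by omega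
    calc q + q * (k - 1) = q * (k - 1 + 1) := by ring
    _ = q' := by rw [hkk, ← hk]
  set M := q * (k - 1) with hM
  have e1 : T[e - q']? = T[e - q' + q']? := hF (e - q') (by omega) (by omega)
  have e2 : T[e - q']? = T[e - q' + M]? :=
    perF_mul hrun (k - 1) (e - q') (by omega) (by rw [← hM]; omega)
  have e3 : e - q' + q' = e := by omega
  have e4 : e - q' + M = e - q := by omega
  rw [e3] at e1
  rw [e4] at e2
  exact e1.symm.trans e2

/-- Adjacent windows in `R_{ℓ,p}` have the same minimal period. -/
lemma window_eq {T : List α} {ℓ p x : ℕ} (hl : 2 * p ≤ ℓ) (hp : 1 ≤ p)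
    (hx : x ∈ RSet T ℓ p) (hx' : x + 1 ∈ RSet T ℓ p) :
    per (frag T x (x + ℓ)) = per (frag T (x + 1) (x + 1 + ℓ)) := by
  obtain ⟨hxl, hxp⟩ := hx
  obtain ⟨hxl', hxp'⟩ := hx'
  obtain ⟨ha1, hb1, hw1⟩ := per_frag_spec (T := T) (a := x) (c := x + ℓ) (by omega) hxl
  obtain ⟨ha2, hb2, hw2⟩ :=
    per_frag_spec (T := T) (a := x + 1) (c := x + 1 + ℓ) (by omega) hxl'
  set q1 := per (frag T x (x + ℓ)) with h1def
  set q2 := per (frag T (x + 1) (x + 1 + ℓ)) with h2def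
  -- overlap [x + 1, x + ℓ)
  have ho1 : PerF T (x + 1) (x + ℓ) q1 := perF_mono hw1 (by omega) le_rfl
  have ho2 : PerF T (x + 1) (x + ℓ) q2 := perF_mono hw2 le_rfl (by omega)
  have hg := overlap_gcd ho1 ho2 ha1 ha2 hxp hxp' hl (by omega)
  set g := Nat.gcd q1 q2 with hgdef
  have hgq1 : g ∣ q1 := Nat.gcd_dvd_left _ _
  have hgq2 : g ∣ q2 := Nat.gcd_dvd_right _ _
  have hgpos : 0 < g := Nat.gcd_pos_of_pos_left _ ha1
  have heq1 : g = q1 := by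
    rcases eq_or_lt_of_le (Nat.le_of_dvd (by omega) hgq1) with h | h
    · exact h
    · have hfull : PerF T x (x + ℓ) g :=
        prop_right (by omega) hgpos hw1 hg (by omega) (by omega)
      have := gcd_eq_per (T := T) (a := x) (c := x + ℓ) (by omega) hxl
        (h1def ▸ hgq1) hgpos hfull
      rwa [← h1def] at this
  have heq2 : g = q2 := by
    rcases eq_or_lt_of_le (Nat.le_of_dvd (by omega) hgq2) with h | h
    · exact h
    · have hfull : PerF T (x + 1) (x + 1 + ℓ) g :=
        prop_left (by omega) hgpos hw2 hg (by omega) (by omega)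
      have := gcd_eq_per (T := T) (a := x + 1) (c := x + 1 + ℓ) (by omega) hxl'
        (h2def ▸ hgq2) hgpos hfull
      rwa [← h2def] at this
  omega

end Aux

/-- `RUNS_{ℓ,p}(T)` coincides with the fragments `T[b..e)` for which
`[b..e−ℓ]` is a non-empty maximal interval contained in
`R_{ℓ,p}(T) = { i : per(T[i..i+ℓ)) ≤ p }`. -/
theorem statement17 {α : Type*} (T : List α) (ℓ p : ℕ)
    (hp1 : 1 ≤ p) (hpn : p ≤ T.length) (hℓ1 : 1 ≤ ℓ) (hℓn : ℓ ≤ T.length)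
    (hℓp : 2 * p ≤ ℓ) :
    ∀ b e : ℕ, IsRunLP T ℓ p b e ↔
      (b + ℓ ≤ e ∧
        (∀ x : ℕ, b ≤ x → x + ℓ ≤ e → x ∈ RSet T ℓ p) ∧
        (∀ x : ℕ, x + 1 = b → x ∉ RSet T ℓ p) ∧
        e - ℓ + 1 ∉ RSet T ℓ p) := by
  intro b e
  constructor
  · rintro ⟨⟨hbe, he, h2per, hleft, hright⟩, hlen, hper⟩
    obtain ⟨hq1, hq2, hrun⟩ := per_frag_spec hbe he
    refine ⟨by omega, ?_, ?_, ?_⟩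
    · intro x hbx hxe
      refine ⟨by omega, ?_⟩
      have hwin : PerF T x (x + ℓ) (per (frag T b e)) := perF_mono hrun hbx (by omega)
      have := per_frag_le (T := T) (a := x) (c := x + ℓ) (by omega) (by omega)
        hq1 (by omega) hwin
      omega
    · intro x hxb hmem
      have hb : 1 ≤ b := by omega
      have hx : b - 1 ∈ RSet T ℓ p := by
        have hxeq : x = b - 1 := by omega
        rwa [hxeq] at hmem
      have heq := ext_left hbe he hℓp hlen hb hper hx
      rcases hleft with h0 | hne
      · omega
      · exact hne heq
    · intro hmem
      have hE : e + 1 ≤ T.length := by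
        have h1 := hmem.1
        omega
      have heq := ext_right hbe he hℓp hlen hper hmem
      rcases hright with h0 | hne
      · omega
      · exact hne heq
  · rintro ⟨hbe, hin, hL, hR⟩
    have hEmem : e - ℓ ∈ RSet T ℓ p := hin (e - ℓ) (by omega) (by omega)
    have he : e ≤ T.length := by have h1 := hEmem.1; omega
    have hbeℓ : b < e := by omega
    have hbmem : b ∈ RSet T ℓ p := hin b le_rfl (by omega)
    obtain ⟨hbl, hbp⟩ := hbmem
    obtain ⟨hq1, hq2, hw⟩ := per_frag_spec (T := T) (a := b) (c := b + ℓ) (by omega) hbl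
    set q := per (frag T b (b + ℓ)) with hqdef
    -- all windows have the same minimal period q
    have hall : ∀ d : ℕ, b + d + ℓ ≤ e → per (frag T (b + d) (b + d + ℓ)) = q := by
      intro d
      induction d with
      | zero =>
        intro _
        rw [Nat.add_zero]
      | succ d IH =>
        intro hd
        have h1 := IH (by omega)
        have h2 := window_eq (T := T) (ℓ := ℓ) (p := p) (x := b + d) hℓp hp1
          (hin (b + d) (by omega) (by omega)) (hin (b + d + 1) (by omega) (by omega))
        have h3 : b + (d + 1) = b + d + 1 := by omega
        rw [h3, ← h2]
        exact h1
    have hallx : ∀ x : ℕ, b ≤ x → x + ℓ ≤ e → per (frag T x (x + ℓ)) = q := by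
      intro x hx1 hx2
      have h1 := hall (x - b) (by omega)
      have h2 : b + (x - b) = x := by omega
      rwa [h2] at h1
    -- the whole fragment has period q
    have hrunq : PerF T b e q := by
      intro i hi hic
      rcases le_or_gt i (e - ℓ) with hcase | hcase
      · have hw' := hallx i hi (by omega)
        obtain ⟨_, _, hwin⟩ := per_frag_spec (T := T) (a := i) (c := i + ℓ)
          (by omega) ((hin i hi (by omega)).1)
        rw [hw'] at hwin
        exact hwin i le_rfl (by omega)
      · have hw' := hallx (e - ℓ) (by omega) (by omega)
        obtain ⟨_, _, hwin⟩ := per_frag_spec (T := T) (a := e - ℓ) (c := e - ℓ + ℓ)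
          (by omega) ((hin (e - ℓ) (by omega) (by omega)).1)
        rw [hw'] at hwin
        exact hwin i (by omega) (by omega)
    -- the minimal period of the whole fragment is q
    have hperq : per (frag T b e) = q := by
      have hle1 : per (frag T b e) ≤ q := per_frag_le (by omega) he hq1 (by omega) hrunq
      obtain ⟨hr1, hr2, hr3⟩ := per_frag_spec hbeℓ he
      have hwb : PerF T b (b + ℓ) (per (frag T b e)) := perF_mono hr3 le_rfl (by omega)
      have hle2 := per_frag_le (T := T) (a := b) (c := b + ℓ) (by omega) hbl hr1
        (by omega) hwb
      rw [← hqdef] at hle2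
      omega
    refine ⟨⟨hbeℓ, he, ?_, ?_, ?_⟩, by omega, by rw [hperq]; omega⟩
    · rw [hperq]; omega
    · -- left maximality
      rcases Nat.eq_zero_or_pos b with h0 | hb
      · exact Or.inl h0
      · right
        rw [hperq]
        intro heq
        apply hL (b - 1) (by omega)
        refine ⟨by omega, ?_⟩
        have hpf : PerF T (b - 1) (b - 1 + ℓ) q := by
          intro i hi hic
          rcases eq_or_lt_of_le hi with h | h
          · rw [← h]
            exact heq
          · exact hrunq i (by omega) (by omega)
        have := per_frag_le (T := T) (a := b - 1) (c := b - 1 + ℓ) (by omega) (by omega)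
          hq1 (by omega) hpf
        omega
    · -- right maximality
      rcases eq_or_lt_of_le he with h0 | hlt
      · exact Or.inl h0
      · right
        rw [hperq]
        intro heq
        apply hR
        refine ⟨by omega, ?_⟩
        have hpf : PerF T (e - ℓ + 1) (e - ℓ + 1 + ℓ) q := by
          intro i hi hic
          have hie : i + q ≤ e := by omega
          rcases eq_or_lt_of_le hie with h | h
          · have hh1 : T[i]? = T[e - q]? := by rw [show i = e - q by omega]
            have hh2 : T[i + q]? = T[e]? := by rw [h]
            rw [hh1, hh2]
            exact heq.symm
          · exact hrunq i (by omega) h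
        have := per_frag_le (T := T) (a := e - ℓ + 1) (c := e - ℓ + 1 + ℓ) (by omega)
          (by omega) hq1 (by omega) hpf
        omega



end SyncFormal
end

section
/- There is a universal constant C with the following property. For every integer N ≥ 5 and every bitmask A ∈ {0,1}^n with n ≥ 1, there exist an integer h with 1 ≤ h ≤ C·(1 + |⟨A⟩|/log₂ N) and nondecreasing integer sequences p_0 ≤ p_1 ≤ ⋯ ≤ p_h, e_0 ≤ e_1 ≤ ⋯ ≤ e_h, and r_0 ≤ r_1 ≤ ⋯ ≤ r_h, with p_0 = e_0 = 0, p_h = n, e_h = |⟨A⟩|, such that for every i ∈ [0..h]: r_i = rank_A(p_i); and for every i ∈ [0..h): the bit string ⟨A⟩[e_i..e_{i+1}) equals ⟨A[p_i..p_{i+1})⟩, and either A[p_i..p_{i+1}) is all-zero or r_{i+1} − r_i ≤ e_{i+1} − e_i ≤ log₂ N. -/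
/-!
Cut `⟨A⟩` only at token boundaries: split `A` into single ones and maximal zero runs, whose
encodings concatenate to `⟨A⟩`, and group these blocks greedily from the right, extending a
group while its encoding stays within `K = ⌊log₂ N⌋` bits. Every group is then a lone zero run
or has an encoding of at most `K` bits, and any two neighbouring groups together take more than
`K` bits, so `h·K ≤ 2|⟨A⟩| + K`. As `K ≤ log₂ N < K + 1 ≤ 3K/2`, this gives
`h ≤ 3(1 + |⟨A⟩|/log₂ N)`. Every `1` of `A` costs two bits of its group's encoding, which
bounds the rank increments.
-/

namespace SyncFormal

lemma sparseEncAux_replicate_append (c z : ℕ) (L : List ℕ) :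
    sparseEncAux z (List.replicate c 0 ++ L) = sparseEncAux (z + c) L := by
  induction c generalizing z with
  | zero => rfl
  | succ c ih =>
    rw [List.replicate_succ, List.cons_append, sparseEncAux, ih]
    congr 1
    omega

lemma sparseEnc_replicate (c : ℕ) : sparseEnc (List.replicate c 0) = sparseEncAux c [] := by
  simpa [sparseEnc] using sparseEncAux_replicate_append c 0 []

lemma sparseEncAux_cons_of_ne_zero (z : ℕ) {x : ℕ} (hx : x ≠ 0) (L : List ℕ) :
    sparseEncAux z (x :: L) = sparseEncAux z [] ++ sparseEnc (x :: L) := by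
  obtain ⟨x, rfl⟩ := Nat.exists_eq_succ_of_ne_zero hx
  by_cases hz : z = 0 <;> simp [sparseEncAux, sparseEnc, hz]

lemma sparseEnc_one_cons (L : List ℕ) : sparseEnc (1 :: L) = true :: true :: sparseEnc L := by
  simp [sparseEnc, sparseEncAux, eliasGamma]

lemma count_le_length_sparseEncAux {x : ℕ} (hx : x ≠ 0) (z : ℕ) (L : List ℕ) :
    L.count x ≤ (sparseEncAux z L).length := by
  induction L generalizing z with
  | nil => simp
  | cons y L ih =>
    rcases y with _ | y
    · simpa [sparseEncAux, List.count_cons, Ne.symm hx] using ih (z + 1)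
    · have := ih 0
      simp only [sparseEncAux, List.count_cons, List.length_append, List.length_cons]
      split <;> omega

/-- A splitting of a bitmask into the blocks encoded by single tokens of `⟨A⟩`: single ones and
maximal runs of zeros. -/
def IsTokenSplit (T : List (List ℕ)) : Prop :=
  (∀ t ∈ T, t = [1] ∨ ∃ x, t = List.replicate (x + 1) 0) ∧
    T.IsChain fun s t => s = [1] ∨ t = [1]

lemma IsTokenSplit.infix {T T' : List (List ℕ)} (hT : IsTokenSplit T) (h : T' <:+: T) :
    IsTokenSplit T' :=
  ⟨fun t ht => hT.1 t (h.subset ht), hT.2.infix h⟩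

lemma exists_isTokenSplit (A : List ℕ) (hA : ∀ x ∈ A, x ≤ 1) :
    ∃ T, T.flatten = A ∧ IsTokenSplit T := by
  induction A with
  | nil => exact ⟨[], rfl, by simp [IsTokenSplit]⟩
  | cons a A ih =>
    obtain ⟨T, rfl, hT⟩ := ih fun x hx => hA x (List.mem_cons_of_mem a hx)
    have ha := hA a List.mem_cons_self
    interval_cases a
    · rcases T with _ | ⟨t, T⟩
      · exact ⟨[[0]], rfl, List.forall_mem_singleton.2 (Or.inr ⟨0, rfl⟩),
        List.isChain_singleton _⟩
      · rcases hT.1 t List.mem_cons_self with rfl | ⟨x, rfl⟩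
        · refine ⟨[0] :: [1] :: T, rfl, List.forall_mem_cons.2 ⟨Or.inr ⟨0, rfl⟩, hT.1⟩, ?_⟩
          simpa using hT.2
        · refine ⟨List.replicate (x + 2) 0 :: T, rfl, ?_, ?_⟩
          · simpa using hT.1
          · simpa [List.isChain_cons, List.replicate_succ] using hT.2
    · refine ⟨[1] :: T, rfl, ?_, ?_⟩
      · simpa using hT.1
      · simpa [List.isChain_cons] using hT.2

lemma IsTokenSplit.sparseEnc_flatten {T : List (List ℕ)} (hT : IsTokenSplit T) :
    sparseEnc T.flatten = (T.map sparseEnc).flatten := by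
  induction T with
  | nil => rfl
  | cons t T ih =>
    rw [List.flatten_cons, List.map_cons, List.flatten_cons,
      ← ih (hT.infix (List.suffix_cons t T).isInfix)]
    rcases hT.1 t List.mem_cons_self with rfl | ⟨x, rfl⟩
    · rw [List.singleton_append, sparseEnc_one_cons, sparseEnc_one_cons]
      rfl
    · rw [sparseEnc, sparseEncAux_replicate_append, sparseEnc_replicate, zero_add]
      rcases T with _ | ⟨s, T⟩
      · simp [sparseEnc, sparseEncAux]
      · obtain rfl : s = [1] := (List.isChain_cons_cons.1 hT.2).1.resolve_left
          (by simp [List.replicate_succ])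
        rw [List.flatten_cons, List.singleton_append, sparseEncAux_cons_of_ne_zero _ one_ne_zero]

theorem exists_chunks {α : Type*} (w : α → ℕ) (K : ℕ) (l : List α) :
    ∃ C : List (List α), C.flatten = l ∧ (∀ c ∈ C, c.length = 1 ∨ (c.map w).sum ≤ K) ∧
      (C.map fun c => (c.map w).sum).IsChain fun a b => K < a + b := by
  induction l with
  | nil => exact ⟨[], rfl, by simp, List.isChain_nil⟩
  | cons a l ih =>
    obtain ⟨C, rfl, hshort, hchain⟩ := ih
    rcases C with _ | ⟨c, C⟩
    · exact ⟨[[a]], rfl, by simp, List.isChain_singleton _⟩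
    by_cases hfit : w a + (c.map w).sum ≤ K
    · refine ⟨(a :: c) :: C, rfl, List.forall_mem_cons.2 ⟨Or.inr (by simpa using hfit),
        fun c' hc' => hshort c' (List.mem_cons_of_mem c hc')⟩, ?_⟩
      simp only [List.map_cons, List.sum_cons, List.isChain_cons] at hchain ⊢
      exact ⟨fun y hy => (hchain.1 y hy).trans_le (by omega), hchain.2⟩
    · refine ⟨[a] :: c :: C, rfl, List.forall_mem_cons.2 ⟨Or.inl rfl, hshort⟩, ?_⟩
      simpa [List.isChain_cons_cons] using ⟨by omega, hchain⟩

lemma length_mul_le_of_isChain (K : ℕ) :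
    ∀ {l : List ℕ}, l.IsChain (fun a b => K < a + b) → l.length * K ≤ 2 * l.sum + K
  | [], _ => by simp
  | [x], _ => by simp
  | x :: y :: l, h => by
    have hxy := (List.isChain_cons_cons.1 h).1
    have ih := length_mul_le_of_isChain K (List.isChain_cons_cons.1 h).2.tail
    simp only [List.tail_cons, List.length_cons, List.sum_cons, add_mul] at ih ⊢
    omega

theorem exists_sparseEnc_segmentation {K : ℕ} (hK : 2 ≤ K) (A : List ℕ)
    (hA : ∀ x ∈ A, x ≤ 1) :
    ∃ P : List (List ℕ), P.flatten = A ∧ (P.map sparseEnc).flatten = sparseEnc A ∧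
      (∀ g ∈ P, (∀ x ∈ g, x = 0) ∨ (sparseEnc g).length ≤ K) ∧
      P.length * K ≤ 2 * (sparseEnc A).length + K := by
  obtain ⟨T, rfl, hT⟩ := exists_isTokenSplit A hA
  obtain ⟨C, rfl, hshort, hchain⟩ := exists_chunks (fun t => (sparseEnc t).length) K T
  have hC : ∀ c ∈ C, sparseEnc c.flatten = (c.map sparseEnc).flatten := fun c hc =>
    (hT.infix (List.infix_of_mem_flatten hc)).sparseEnc_flatten
  have hlen : ∀ c ∈ C, (sparseEnc c.flatten).length = (c.map fun t => (sparseEnc t).length).sum :=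
    fun c hc => by rw [hC c hc, List.length_flatten, List.map_map]; rfl
  have henc : ((C.map List.flatten).map sparseEnc).flatten = sparseEnc C.flatten.flatten := by
    rw [hT.sparseEnc_flatten, List.map_flatten, List.flatten_flatten, List.map_map, List.map_map]
    exact congrArg List.flatten (List.map_congr_left hC)
  refine ⟨C.map List.flatten, List.flatten_flatten.symm, henc, ?_, ?_⟩
  · simp only [List.mem_map, forall_exists_index, and_imp, forall_apply_eq_imp_iff₂]
    intro c hc
    rcases hshort c hc with hsingle | hsum
    · obtain ⟨t, rfl⟩ := List.length_eq_one_iff.1 hsingle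
      rcases hT.1 t (List.mem_flatten.2 ⟨_, hc, List.mem_singleton_self t⟩) with rfl | ⟨x, rfl⟩
      · exact Or.inr hK -- `⟨[1]⟩ = 11`
      · exact Or.inl fun y hy => List.eq_of_mem_replicate (n := x + 1) (by simpa using hy)
    · exact Or.inr ((hlen c hc).trans_le hsum)
  · have hsums : (C.map fun c => (c.map fun t => (sparseEnc t).length).sum).sum =
        (sparseEnc C.flatten.flatten).length := by
      rw [← henc, List.length_flatten, List.map_map, List.map_map]
      exact congrArg List.sum (List.map_congr_left fun c hc => (hlen c hc).symm)
    simpa [hsums] using length_mul_le_of_isChain K hchain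

section Offsets

variable {α : Type*} (L : List (List α))

lemma sum_take_map_length_mono (i : ℕ) :
    ((L.map List.length).take i).sum ≤ ((L.map List.length).take (i + 1)).sum := by
  rw [List.take_add_one, List.sum_append]
  exact Nat.le_add_right _ _

lemma sum_take_succ_map_length {i : ℕ} (hi : i < L.length) :
    ((L.map List.length).take (i + 1)).sum = ((L.map List.length).take i).sum + L[i].length := by
  rw [List.sum_take_succ _ _ (by simpa using hi), List.getElem_map]

lemma take_sum_take_succ_flatten {i : ℕ} (hi : i < L.length) :
    L.flatten.take ((L.map List.length).take (i + 1)).sum =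
      L.flatten.take ((L.map List.length).take i).sum ++ L[i] := by
  rw [List.take_sum_flatten, List.take_sum_flatten, List.take_add_one,
    List.getElem?_eq_getElem hi, List.flatten_append]
  simp

lemma frag_flatten_sum_take {i : ℕ} (hi : i < L.length) :
    frag L.flatten ((L.map List.length).take i).sum ((L.map List.length).take (i + 1)).sum =
      L[i] := by
  rw [frag, ← List.drop_take, List.drop_take_succ_flatten_eq_getElem L i hi]

lemma sum_take_length_map_length :
    ((L.map List.length).take L.length).sum = L.flatten.length := by
  rw [List.length_flatten, List.take_of_length_le (by simp)]

end Offsets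

lemma natCast_le_three_mul_one_add_div_logb {N h S : ℕ} (hK : 2 ≤ Nat.log 2 N)
    (hh : h * Nat.log 2 N ≤ 2 * S + Nat.log 2 N) :
    (h : ℝ) ≤ 3 * (1 + S / Real.logb 2 N) := by
  set K := Nat.log 2 N
  have hKL : (K : ℝ) ≤ Real.logb 2 N := by exact_mod_cast Real.natLog_le_logb N 2
  have hLK : Real.logb 2 N < K + 1 := by
    simpa [K, ← Real.natFloor_logb_natCast] using Nat.lt_floor_add_one (Real.logb 2 N)
  have hK' : (2 : ℝ) ≤ K := by exact_mod_cast hK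
  have hh' : (h : ℝ) * K ≤ 2 * S + K := by exact_mod_cast hh
  have hL : 0 < Real.logb 2 N := by linarith
  have hh0 : (0 : ℝ) ≤ h := h.cast_nonneg
  have key : (h : ℝ) * Real.logb 2 N ≤ 3 * Real.logb 2 N + 3 * S := by
    nlinarith [mul_le_mul_of_nonneg_left hLK.le hh0, mul_nonneg hh0 (sub_nonneg.2 hK')]
  calc (h : ℝ) ≤ (3 * Real.logb 2 N + 3 * S) / Real.logb 2 N := (le_div_iff₀ hL).2 key
    _ = 3 * (1 + S / Real.logb 2 N) := by field_simp

/-- Decomposition of the sparse encoding of a bitmask `A` into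
`h = O(1 + |⟨A⟩|/log₂ N)` pieces supporting rank/select. -/
theorem statement19 : ∃ C : ℝ, 0 < C ∧
    ∀ (N : ℕ), 5 ≤ N → ∀ (A : List ℕ), 1 ≤ A.length → (∀ x ∈ A, x ≤ 1) →
      ∃ (h : ℕ) (p e r : ℕ → ℕ),
        1 ≤ h ∧
        (h : ℝ) ≤ C * (1 + ((sparseEnc A).length : ℝ) / Real.logb 2 (N : ℝ)) ∧
        (∀ i : ℕ, i < h → p i ≤ p (i + 1) ∧ e i ≤ e (i + 1) ∧ r i ≤ r (i + 1)) ∧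
        p 0 = 0 ∧ e 0 = 0 ∧ p h = A.length ∧ e h = (sparseEnc A).length ∧
        (∀ i : ℕ, i ≤ h → r i = (A.take (p i)).count 1) ∧
        (∀ i : ℕ, i < h →
          frag (sparseEnc A) (e i) (e (i + 1)) = sparseEnc (frag A (p i) (p (i + 1))) ∧
          ((∀ x ∈ frag A (p i) (p (i + 1)), x = 0) ∨
            (r (i + 1) - r i ≤ e (i + 1) - e i ∧
              ((e (i + 1) - e i : ℕ) : ℝ) ≤ Real.logb 2 (N : ℝ)))) := by
  refine ⟨3, by norm_num, fun N hN A hA0 hA => ?_⟩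
  have hK : 2 ≤ Nat.log 2 N := Nat.le_log_of_pow_le (by norm_num) (by omega)
  obtain ⟨P, rfl, hPenc, hPshort, hPcount⟩ := exists_sparseEnc_segmentation hK A hA
  set E := P.map sparseEnc
  have hE : E.length = P.length := List.length_map _
  refine ⟨P.length, fun i => ((P.map List.length).take i).sum,
    fun i => ((E.map List.length).take i).sum,
    fun i => (P.flatten.take ((P.map List.length).take i).sum).count 1,
    List.length_pos_iff.2 (by rintro rfl; simp at hA0),
    natCast_le_three_mul_one_add_div_logb hK hPcount, fun i _ => ?_, by simp, by simp,
    sum_take_length_map_length P, ?_, fun _ _ => rfl, fun i hi => ?_⟩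
  · have hp := sum_take_map_length_mono P i
    exact ⟨hp, sum_take_map_length_mono E i, (List.take_prefix_take_left hp).count_le 1⟩
  · dsimp only
    rw [← hE, sum_take_length_map_length, hPenc]
  · have hiE : i < E.length := hE ▸ hi
    dsimp only
    rw [← hPenc, frag_flatten_sum_take E hiE, frag_flatten_sum_take P hi,
      take_sum_take_succ_flatten P hi, sum_take_succ_map_length E hiE, List.count_append,
      List.getElem_map, Nat.add_sub_cancel_left, Nat.add_sub_cancel_left]
    refine ⟨rfl, (hPshort P[i] (List.getElem_mem hi)).imp_right fun hlen => ⟨?_, ?_⟩⟩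
    · exact count_le_length_sparseEncAux one_ne_zero 0 P[i]
    · exact (Nat.cast_le.2 hlen).trans (Real.natLog_le_logb N 2)

end SyncFormal
end
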